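/- arXiv:2507.01716 — 5 statements merged into one kernel-verified Lean document; each statement's English description precedes it below -/
import Mathlib

section
/- Let D = D_{2r} = ⟨c⟩ ⋊ ⟨b⟩ be dihedral, p an odd prime with p ∤ r, and let M be a simple F_p D-module of even dimension d. For every pair of nonzero vectors m, n ∈ E_1(b) (the fixed space of b), there exists a D-module endomorphism f ∈ End_D(M) with f(m) = n. -/
/-!
Since `m` generates the simple module `M` and is fixed by the reflection `b`, the orbit of `m`
under the rotations already spans `M`, so `n = A m` for some `A` in the span of the rotation
operators. This span is commutative and stable under conjugation by `b`, so the average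
`(A + b A b) / 2` commutes with all rotations and with `b`, hence with all of `D`; it still
sends `m` to `n` because `b` fixes both.
-/

open DihedralGroup

theorem Commute.add_mul_mul_of_mul_self_eq_one {R : Type*} [Ring R] {s : R} (hs : s * s = 1)
    (a : R) : Commute s (a + s * a * s) := by
  have hsas : s * (s * a * s) = a * s := by rw [← mul_assoc, ← mul_assoc, hs, one_mul]
  have hass : s * a * s * s = s * a := by rw [mul_assoc, hs, mul_one]
  rw [Commute, SemiconjBy, mul_add, add_mul, hsas, hass, add_comm]

theorem Representation.span_orbit_eq_top {k G M : Type*} [CommSemiring k] [Monoid G]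
    [AddCommMonoid M] [Module k M] (ρ : Representation k G M)
    (hsimple : ∀ W : Submodule k M, (∀ g, ∀ m ∈ W, ρ g m ∈ W) → W = ⊥ ∨ W = ⊤)
    {m : M} (hm0 : m ≠ 0) : Submodule.span k (Set.range fun g => ρ g m) = ⊤ := by
  refine (hsimple _ fun g v hv => ?_).resolve_left fun hbot => hm0 ?_
  · have hmap : (Submodule.span k (Set.range fun g => ρ g m)).map (ρ g) ≤
        Submodule.span k (Set.range fun g => ρ g m) := by
      rw [Submodule.map_span, Submodule.span_le]
      rintro _ ⟨_, ⟨h, rfl⟩, rfl⟩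
      exact Submodule.subset_span ⟨g * h, by simp⟩
    exact hmap ⟨v, hv, rfl⟩
  · rw [← Submodule.mem_bot k, ← hbot]
    exact Submodule.subset_span ⟨1, by simp⟩

namespace Representation

variable {k M : Type*} [CommRing k] [AddCommGroup M] [Module k M] {N : ℕ}
  (ρ : Representation k (DihedralGroup N) M)

def rotationSpan : Submodule k (Module.End k M) :=
  Submodule.span k (Set.range fun i => ρ (r i))

theorem commute_of_mem_rotationSpan (i : ZMod N) {A : Module.End k M}
    (hA : A ∈ ρ.rotationSpan) : Commute (ρ (r i)) A := by
  suffices ρ.rotationSpan ≤ (Subalgebra.centralizer k {ρ (r i)}).toSubmodule from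
    (Subalgebra.mem_centralizer_iff k).mp (this hA) _ rfl
  refine Submodule.span_le.mpr ?_
  rintro _ ⟨j, rfl⟩ _ rfl
  rw [← map_mul, ← map_mul, r_mul_r, r_mul_r, add_comm]

theorem reflection_mul_mul_reflection_mem_rotationSpan {A : Module.End k M}
    (hA : A ∈ ρ.rotationSpan) : ρ (sr 0) * A * ρ (sr 0) ∈ ρ.rotationSpan := by
  let conj : Module.End k M →ₗ[k] Module.End k M :=
    LinearMap.mulRight k (ρ (sr 0)) ∘ₗ LinearMap.mulLeft k (ρ (sr 0))
  suffices ρ.rotationSpan.map conj ≤ ρ.rotationSpan from this ⟨A, hA, rfl⟩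
  rw [rotationSpan, Submodule.map_span, Submodule.span_le]
  rintro _ ⟨_, ⟨i, rfl⟩, rfl⟩
  refine Submodule.subset_span ⟨-i, ?_⟩
  simp only [conj, LinearMap.comp_apply, LinearMap.mulLeft_apply, LinearMap.mulRight_apply,
    ← map_mul, sr_mul_r, sr_mul_sr, zero_add, zero_sub]

theorem exists_mem_rotationSpan_apply_eq
    (hsimple : ∀ W : Submodule k M, (∀ g, ∀ m ∈ W, ρ g m ∈ W) → W = ⊥ ∨ W = ⊤)
    {m : M} (hm : ρ (sr 0) m = m) (hm0 : m ≠ 0) (n : M) :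
    ∃ A ∈ ρ.rotationSpan, A m = n := by
  have horbit :
      Set.range (fun g => ρ g m) = LinearMap.applyₗ m '' Set.range fun i => ρ (r i) := by
    ext
    constructor
    · rintro ⟨g, rfl⟩
      cases g with
      | r i => exact ⟨ρ (r i), ⟨i, rfl⟩, rfl⟩
      | sr i =>
        refine ⟨ρ (r (-i)), ⟨-i, rfl⟩, ?_⟩
        calc ρ (r (-i)) m = ρ (r (-i)) (ρ (sr 0) m) := by rw [hm]
          _ = ρ (sr i) m := by
            rw [← Module.End.mul_apply, ← map_mul, r_mul_sr, zero_sub, neg_neg]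
    · rintro ⟨_, ⟨i, rfl⟩, rfl⟩
      exact ⟨r i, rfl⟩
  have hn : n ∈ ρ.rotationSpan.map (LinearMap.applyₗ m) := by
    rw [rotationSpan, ← Submodule.span_image, ← horbit, ρ.span_orbit_eq_top hsimple hm0]
    trivial
  exact hn

theorem mem_centralizer_of_commute_rotations {f : Module.End k M}
    (hr : ∀ i, Commute (ρ (r i)) f) (hs : Commute (ρ (sr 0)) f) :
    f ∈ Subring.centralizer (Set.range fun g => (ρ g : Module.End k M)) := by
  rw [Subring.mem_centralizer_iff]
  rintro _ ⟨g, rfl⟩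
  cases g with
  | r i => exact (hr i).eq
  | sr i =>
    change ρ (sr i) * f = f * ρ (sr i)
    rw [← zero_add i, ← sr_mul_r, map_mul]
    exact (hs.mul_left (hr i)).eq

theorem exists_mem_centralizer_apply_eq [Invertible (2 : k)]
    (hsimple : ∀ W : Submodule k M, (∀ g, ∀ m ∈ W, ρ g m ∈ W) → W = ⊥ ∨ W = ⊤)
    {m n : M} (hm : ρ (sr 0) m = m) (hn : ρ (sr 0) n = n) (hm0 : m ≠ 0) :
    ∃ f ∈ Subring.centralizer (Set.range fun g => (ρ g : Module.End k M)),
      f m = n := by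
  set s := ρ (sr 0)
  obtain ⟨A, hA, hAm⟩ := ρ.exists_mem_rotationSpan_apply_eq hsimple hm hm0 n
  have hss : s * s = 1 := by rw [← map_mul, sr_mul_sr, sub_zero, ← one_def, map_one]
  have hf : (⅟2 : k) • (A + s * A * s) ∈ ρ.rotationSpan :=
    Submodule.smul_mem _ _
      (Submodule.add_mem _ hA (ρ.reflection_mul_mul_reflection_mem_rotationSpan hA))
  refine ⟨(⅟2 : k) • (A + s * A * s), ρ.mem_centralizer_of_commute_rotations
    (fun i => ρ.commute_of_mem_rotationSpan i hf)
    ((Commute.add_mul_mul_of_mul_self_eq_one hss A).smul_right _), ?_⟩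
  rw [LinearMap.smul_apply, LinearMap.add_apply, Module.End.mul_apply, Module.End.mul_apply, hm,
    hAm, hn, ← two_smul k, smul_smul, invOf_mul_self, one_smul]

end Representation

theorem stmt_4_general (p r : ℕ) (hp : Odd p)
    (M : Type) [AddCommGroup M] [Module (ZMod p) M]
    (ρ : Representation (ZMod p) (DihedralGroup r) M)
    (hsimple : ∀ W : Submodule (ZMod p) M, (∀ g, ∀ m ∈ W, ρ g m ∈ W) → W = ⊥ ∨ W = ⊤)
    (m n : M) (hm : ρ (DihedralGroup.sr 0) m = m) (hn : ρ (DihedralGroup.sr 0) n = n)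
    (hm0 : m ≠ 0) :
    ∃ f ∈ Subring.centralizer (Set.range fun g => (ρ g : Module.End (ZMod p) M)),
      f m = n := by
  have h2 : IsUnit (2 : ZMod p) := by
    exact_mod_cast (ZMod.isUnit_iff_coprime 2 p).mpr (Nat.coprime_two_left.mpr hp)
  let := h2.invertible
  exact ρ.exists_mem_centralizer_apply_eq hsimple hm hn hm0

/-- Let `M` be a simple `F_p D_{2r}`-module of even dimension (`p` an odd prime, `p ∤ r`),
with `D_{2r} = ⟨c⟩ ⋊ ⟨b⟩` and `b` the reflection `sr 0`. For any nonzero `m, n` in the fixed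
space `E_1(b)`, there is a `D`-module endomorphism `f` of `M` with `f m = n`. -/
theorem stmt_4 (p r d : ℕ) [Fact p.Prime] (hp : Odd p) (hr : 3 ≤ r) (hpr : ¬ p ∣ r)
    (M : Type) [AddCommGroup M] [Module (ZMod p) M] [FiniteDimensional (ZMod p) M]
    (ρ : Representation (ZMod p) (DihedralGroup r) M)
    (hMnt : Nontrivial M)
    (hsimple : ∀ W : Submodule (ZMod p) M, (∀ g, ∀ m ∈ W, ρ g m ∈ W) → W = ⊥ ∨ W = ⊤)
    (hd : Module.finrank (ZMod p) M = d) (hdeven : Even d)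
    (m n : M) (hm : ρ (DihedralGroup.sr 0) m = m) (hn : ρ (DihedralGroup.sr 0) n = n)
    (hm0 : m ≠ 0) (hn0 : n ≠ 0) :
    ∃ f ∈ Subring.centralizer (Set.range fun g => (ρ g : Module.End (ZMod p) M)),
      f m = n :=
  stmt_4_general p r hp M ρ hsimple m n hm hn hm0
end

section
/- Let G = V ⋊_ψ D where V = Z_p^d, p ∤ |D|, and ψ is an irreducible, non-trivial representation of D on V. Then the normalizer N_G(D) of D in G equals D. -/
/-!
In any semidirect product `N ⋊ G`, an element normalizes the complement `G` exactly when its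
`N`-component is fixed by all of `G`: conjugating by it then acts on `N`-components by an
automorphism. So `N_G(D) = C_V(D) ⋊ D`. The fixed points `C_V(D)` form a `D`-invariant subgroup,
which is not all of `V` since the action is nontrivial, hence is `0` by irreducibility.
-/

/-- The multiplicative group structure (composition) that `AddAut V` carried in older Mathlib. -/
instance addAutGroupOld {V : Type*} [Add V] : Group (AddAut V) where
  mul g h := AddEquiv.trans h g
  one := AddEquiv.refl _
  inv := AddEquiv.symm
  mul_assoc _ _ _ := rfl
  one_mul _ := rfl
  mul_one _ := rfl
  inv_mul_cancel := AddEquiv.self_trans_symm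

/-- The canonical homomorphism `AddAut V →* MulAut (Multiplicative V)`. -/
def addAutToMulAut {V : Type*} [AddGroup V] : AddAut V →* MulAut (Multiplicative V) :=
  MonoidHom.mk' (fun e => AddEquiv.toMultiplicative e) (fun e₁ e₂ => by ext x; rfl)

namespace SemidirectProduct

variable {N G : Type*} [Group N] [Group G] {φ : G →* MulAut N}

theorem mem_range_inr_iff {x : N ⋊[φ] G} : x ∈ (inr : G →* N ⋊[φ] G).range ↔ x.left = 1 :=
  ⟨by rintro ⟨g, rfl⟩; rfl, fun h => ⟨x.right, by ext <;> simp [h]⟩⟩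

theorem left_conj_of_forall_apply_left_eq {x : N ⋊[φ] G} (hx : ∀ g, φ g x.left = x.left)
    (y : N ⋊[φ] G) : (x * y * x⁻¹).left = x.left * φ x.right y.left * x.left⁻¹ := by
  have hx_symm : ∀ g, (φ g).symm x.left = x.left :=
    fun g => (MulEquiv.symm_apply_eq _).mpr (hx g).symm
  simp [mul_left, inv_left, hx, hx_symm]

theorem mem_normalizer_range_inr_iff {x : N ⋊[φ] G} :
    x ∈ Subgroup.normalizer ((inr : G →* N ⋊[φ] G).range : Set (N ⋊[φ] G)) ↔
      ∀ g, φ g x.left = x.left := by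
  rw [Subgroup.mem_normalizer_iff]
  constructor
  · intro hx g
    have h := (hx (inr (x.right⁻¹ * g * x.right))).mp ⟨_, rfl⟩
    rw [mem_range_inr_iff] at h
    rw [eq_comm, ← mul_inv_eq_one]
    simpa [mul_left, inv_left] using h
  · intro hx y
    rw [mem_range_inr_iff, mem_range_inr_iff, left_conj_of_forall_apply_left_eq hx]
    simp

end SemidirectProduct

namespace AddSubgroup

variable {ι V : Type*} [AddGroup V]

def commonFixedPoints (ψ : ι → V ≃+ V) : AddSubgroup V where
  carrier := {v | ∀ i, ψ i v = v}
  zero_mem' _ := map_zero _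
  add_mem' ha hb i := by rw [map_add, ha i, hb i]
  neg_mem' ha i := by rw [map_neg, ha i]

theorem commonFixedPoints_eq_bot {ψ : ι → V ≃+ V}
    (hirr : ∀ W : AddSubgroup V, (∀ i, ∀ v ∈ W, ψ i v ∈ W) → W = ⊥ ∨ W = ⊤)
    (hnt : ∃ i v, ψ i v ≠ v) : commonFixedPoints ψ = ⊥ := by
  refine (hirr _ fun i v hv => (hv i).symm ▸ hv).resolve_right fun htop => ?_
  obtain ⟨i, v, hv⟩ := hnt
  exact hv ((htop ▸ mem_top v : v ∈ commonFixedPoints ψ) i)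

end AddSubgroup

theorem stmt_8_general
    (V : Type) [AddCommGroup V]
    (D : Type) [Group D]
    (ψ : D →* AddAut V)
    (hirr : ∀ W : AddSubgroup V, (∀ g, ∀ v ∈ W, ψ g v ∈ W) → W = ⊥ ∨ W = ⊤)
    (hnt : ∃ g v, ψ g v ≠ v) :
    Subgroup.normalizer (SetLike.coe (SemidirectProduct.inr.range :
        Subgroup (Multiplicative V ⋊[addAutToMulAut.comp ψ] D)))
      = SemidirectProduct.inr.range := by
  have hfix := AddSubgroup.commonFixedPoints_eq_bot (ψ := fun g => ψ g) hirr hnt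
  ext x
  rw [SemidirectProduct.mem_normalizer_range_inr_iff, SemidirectProduct.mem_range_inr_iff]
  refine ⟨fun hx => ?_, fun hx g => by rw [hx, map_one]⟩
  have hmem : Multiplicative.toAdd x.left ∈ AddSubgroup.commonFixedPoints fun g => ψ g :=
    fun g => congrArg Multiplicative.toAdd (hx g)
  exact toAdd_eq_zero.mp (AddSubgroup.mem_bot.mp (hfix ▸ hmem))

/-- Let `G = V ⋊_ψ D` where `V = Z_p^d`, `p ∤ |D|`, and `ψ` is an irreducible non-trivial
representation of `D` on `V`. Then the normalizer of `D` in `G` equals `D`. -/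
theorem stmt_8 (p : ℕ) [Fact p.Prime]
    (V : Type) [AddCommGroup V] [Finite V] (hV : ∀ v : V, p • v = 0)
    (D : Type) [Group D] [Finite D] (hpD : ¬ p ∣ Nat.card D)
    (ψ : D →* AddAut V)
    (hirr : ∀ W : AddSubgroup V, (∀ g, ∀ v ∈ W, ψ g v ∈ W) → W = ⊥ ∨ W = ⊤)
    (hnt : ∃ g v, ψ g v ≠ v) :
    Subgroup.normalizer (SetLike.coe (SemidirectProduct.inr.range :
        Subgroup (Multiplicative V ⋊[addAutToMulAut.comp ψ] D)))
      = SemidirectProduct.inr.range :=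
  stmt_8_general V D ψ hirr hnt
end

section
/- For i ∈ {1,2}, let G_i = Z_p^{d_i} ⋊_{ψ_i} D_i where p ∤ |D_1||D_2|. Then G_1 ≅ G_2 if and only if there exists a group isomorphism σ : D_1 → D_2 such that ψ_2 ∘ σ ≅ ψ_1 as representations of D_1. Moreover, when such σ exists, there is an isomorphism f : G_1 → G_2 with f(D_1) = D_2 and f restricted to D_1 equal to σ. -/
open SemidirectProduct

namespace SemidirectProduct

section

variable {N G : Type*} [Group N] [Group G] {φ : G →* MulAut N}

theorem inl_left_eq_of_right_eq_one {x : N ⋊[φ] G} (hx : x.right = 1) : inl x.left = x := by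
  rw [← inl_left_mul_inr_right x, hx, map_one, mul_one, left_inl]

theorem pow_eq_one_iff_right_eq_one {n : ℕ} (hN : ∀ a : N, a ^ n = 1)
    (hG : (Nat.card G).Coprime n) (x : N ⋊[φ] G) : x ^ n = 1 ↔ x.right = 1 := by
  constructor
  · intro hx
    apply hG.pow_left_bijective.injective
    simpa only [one_pow, map_pow, map_one, rightHom_eq_right] using congrArg rightHom hx
  · intro hx
    rw [← inl_left_eq_of_right_eq_one hx, ← map_pow, hN, map_one]

end

theorem mul_inl_mul_inv {N G : Type*} [CommGroup N] [Group G] {φ : G →* MulAut N}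
    (y : N ⋊[φ] G) (n : N) : y * inl n * y⁻¹ = inl (φ y.right n) := by
  ext
  · simp only [mul_left, inv_left, mul_right, right_inl, left_inl, mul_one, map_inv]
    rw [MulAut.apply_inv_self, mul_comm y.left, mul_inv_cancel_right]
  · simp

section EquivOfRightEqOne

variable {N₁ N₂ G₁ G₂ : Type*} [Group N₁] [Group N₂] [Group G₁] [Group G₂]
  {φ₁ : G₁ →* MulAut N₁} {φ₂ : G₂ →* MulAut N₂}

theorem congr_inr (fn : N₁ ≃* N₂) (fg : G₁ ≃* G₂)
    (h : ∀ g : G₁, (φ₁ g).trans fn = fn.trans (φ₂ (fg g))) (g : G₁) :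
    congr fn fg h (inr g) = inr (fg g) := by
  ext <;> simp

-- The hypothesis `hf` below says that `f` maps the normal factor `inl N₁` onto `inl N₂`.
variable (f : N₁ ⋊[φ₁] G₁ ≃* N₂ ⋊[φ₂] G₂)

theorem symm_right_eq_one_iff (hf : ∀ x, (f x).right = 1 ↔ x.right = 1) (y : N₂ ⋊[φ₂] G₂) :
    (f.symm y).right = 1 ↔ y.right = 1 := by
  rw [← hf, f.apply_symm_apply]

theorem right_apply_eq_right_apply_iff (hf : ∀ x, (f x).right = 1 ↔ x.right = 1)
    (x y : N₁ ⋊[φ₁] G₁) :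
    (f x).right = (f y).right ↔ x.right = y.right := by
  simpa only [map_mul, map_inv, mul_right, inv_right, inv_mul_eq_one] using hf (x⁻¹ * y)

def rightEquivOf (hf : ∀ x, (f x).right = 1 ↔ x.right = 1) : G₁ ≃* G₂ where
  toFun g := (f (inr g)).right
  invFun g := (f.symm (inr g)).right
  left_inv g := by
    dsimp only
    rw [(right_apply_eq_right_apply_iff f.symm (symm_right_eq_one_iff f hf)
      (inr (f (inr g)).right) (f (inr g))).2 rfl, f.symm_apply_apply, right_inr]
  right_inv g := by
    dsimp only
    rw [(right_apply_eq_right_apply_iff f hf (inr (f.symm (inr g)).right) (f.symm (inr g))).2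
      rfl, f.apply_symm_apply, right_inr]
  map_mul' a b := by simp only [map_mul, mul_right]

def leftEquivOf (hf : ∀ x, (f x).right = 1 ↔ x.right = 1) : N₁ ≃* N₂ where
  toFun n := (f (inl n)).left
  invFun n := (f.symm (inl n)).left
  left_inv n := by
    dsimp only
    rw [inl_left_eq_of_right_eq_one ((hf _).2 rfl), f.symm_apply_apply, left_inl]
  right_inv n := by
    dsimp only
    rw [inl_left_eq_of_right_eq_one (((symm_right_eq_one_iff f hf) _).2 rfl),
      f.apply_symm_apply, left_inl]
  map_mul' a b := by
    simp only [map_mul, mul_left, (hf _).2 (right_inl a), map_one, MulAut.one_apply]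

theorem inl_leftEquivOf (hf : ∀ x, (f x).right = 1 ↔ x.right = 1) (n : N₁) :
    inl (leftEquivOf f hf n) = f (inl n) :=
  inl_left_eq_of_right_eq_one ((hf _).2 rfl)

end EquivOfRightEqOne

theorem leftEquivOf_aut {N₁ N₂ G₁ G₂ : Type*} [Group N₁] [CommGroup N₂] [Group G₁] [Group G₂]
    {φ₁ : G₁ →* MulAut N₁} {φ₂ : G₂ →* MulAut N₂} (f : N₁ ⋊[φ₁] G₁ ≃* N₂ ⋊[φ₂] G₂)
    (hf : ∀ x, (f x).right = 1 ↔ x.right = 1) (g : G₁) (n : N₁) :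
    leftEquivOf f hf (φ₁ g n) = φ₂ (rightEquivOf f hf g) (leftEquivOf f hf n) := by
  refine inl_injective (φ := φ₂) ?_
  rw [inl_leftEquivOf, inl_aut, map_mul, map_mul, map_inv, map_inv, ← inl_leftEquivOf f hf n]
  exact mul_inl_mul_inv (f (inr g)) _

end SemidirectProduct

theorem stmt_10_general (p : ℕ) [Fact p.Prime]
    (V₁ V₂ : Type) [AddCommGroup V₁] [AddCommGroup V₂]
    (hV₁ : ∀ v : V₁, p • v = 0) (hV₂ : ∀ v : V₂, p • v = 0)
    (D₁ D₂ : Type) [Group D₁] [Group D₂]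
    (hpD : ¬ p ∣ Nat.card D₁ * Nat.card D₂)
    (ψ₁ : D₁ →* AddAut V₁) (ψ₂ : D₂ →* AddAut V₂) :
    (Nonempty ((Multiplicative V₁ ⋊[addAutToMulAut.comp ψ₁] D₁) ≃*
        (Multiplicative V₂ ⋊[addAutToMulAut.comp ψ₂] D₂)) ↔
      ∃ (σ : D₁ ≃* D₂) (e : V₁ ≃+ V₂), ∀ g v, e (ψ₁ g v) = ψ₂ (σ g) (e v)) ∧
    ∀ (σ : D₁ ≃* D₂) (e : V₁ ≃+ V₂), (∀ g v, e (ψ₁ g v) = ψ₂ (σ g) (e v)) →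
      ∃ f : (Multiplicative V₁ ⋊[addAutToMulAut.comp ψ₁] D₁) ≃*
          (Multiplicative V₂ ⋊[addAutToMulAut.comp ψ₂] D₂),
        ∀ x : D₁, f (SemidirectProduct.inr x) = SemidirectProduct.inr (σ x) := by
  have hp := (Fact.out : p.Prime)
  have hD₁ : (Nat.card D₁).Coprime p :=
    ((hp.coprime_iff_not_dvd).2 fun h => hpD (h.mul_right _)).symm
  have hD₂ : (Nat.card D₂).Coprime p :=
    ((hp.coprime_iff_not_dvd).2 fun h => hpD (h.mul_left _)).symm
  have realize : ∀ (σ : D₁ ≃* D₂) (e : V₁ ≃+ V₂), (∀ g v, e (ψ₁ g v) = ψ₂ (σ g) (e v)) →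
      ∃ f : (Multiplicative V₁ ⋊[addAutToMulAut.comp ψ₁] D₁) ≃*
          (Multiplicative V₂ ⋊[addAutToMulAut.comp ψ₂] D₂),
        ∀ x : D₁, f (inr x) = inr (σ x) := fun σ e he =>
    ⟨congr (AddEquiv.toMultiplicative e) σ fun g => by ext v; exact he g v.toAdd, congr_inr _ _ _⟩
  refine ⟨⟨fun ⟨f⟩ => ?_, fun ⟨σ, e, he⟩ => (realize σ e he).elim fun f _ => ⟨f⟩⟩, realize⟩
  have hf : ∀ x, (f x).right = 1 ↔ x.right = 1 := fun x => by
    rw [← pow_eq_one_iff_right_eq_one (fun a => hV₂ a.toAdd) hD₂, ← map_pow,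
      MulEquiv.map_eq_one_iff, pow_eq_one_iff_right_eq_one (fun a => hV₁ a.toAdd) hD₁]
  exact ⟨rightEquivOf f hf, AddEquiv.toMultiplicative.symm (leftEquivOf f hf),
    fun g v => leftEquivOf_aut f hf g (.ofAdd v)⟩

/-- For `i ∈ {1,2}` let `G_i = Z_p^{d_i} ⋊_{ψ_i} D_i` with `p ∤ |D_1||D_2|`. Then
`G_1 ≅ G_2` iff there is an isomorphism `σ : D_1 → D_2` with `ψ_2 ∘ σ ≅ ψ_1`; moreover,
given such a `σ` (with intertwiner `e`), there is an isomorphism `f : G_1 → G_2` carrying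
`D_1` onto `D_2` and restricting to `σ` on `D_1`. -/
theorem stmt_10 (p : ℕ) [Fact p.Prime]
    (V₁ V₂ : Type) [AddCommGroup V₁] [AddCommGroup V₂] [Finite V₁] [Finite V₂]
    (hV₁ : ∀ v : V₁, p • v = 0) (hV₂ : ∀ v : V₂, p • v = 0)
    (D₁ D₂ : Type) [Group D₁] [Group D₂] [Finite D₁] [Finite D₂]
    (hpD : ¬ p ∣ Nat.card D₁ * Nat.card D₂)
    (ψ₁ : D₁ →* AddAut V₁) (ψ₂ : D₂ →* AddAut V₂) :
    (Nonempty ((Multiplicative V₁ ⋊[addAutToMulAut.comp ψ₁] D₁) ≃*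
        (Multiplicative V₂ ⋊[addAutToMulAut.comp ψ₂] D₂)) ↔
      ∃ (σ : D₁ ≃* D₂) (e : V₁ ≃+ V₂), ∀ g v, e (ψ₁ g v) = ψ₂ (σ g) (e v)) ∧
    ∀ (σ : D₁ ≃* D₂) (e : V₁ ≃+ V₂), (∀ g v, e (ψ₁ g v) = ψ₂ (σ g) (e v)) →
      ∃ f : (Multiplicative V₁ ⋊[addAutToMulAut.comp ψ₁] D₁) ≃*
          (Multiplicative V₂ ⋊[addAutToMulAut.comp ψ₂] D₂),
        ∀ x : D₁, f (SemidirectProduct.inr x) = SemidirectProduct.inr (σ x) :=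
  stmt_10_general p V₁ V₂ hV₁ hV₂ D₁ D₂ hpD ψ₁ ψ₂
end

section
/- Let G = Z_p × D_{2r} with p an odd prime, p ∤ r, r ≥ 3. Then the number of pairs (ρ, τ) ∈ G × G with ⟨ρ, τ⟩ = G, |ρ| = 2p and |τ| = 2 is exactly (p−1) r φ(r). -/
/-!
Write `ρ = (a, x)` and `τ = (b, y)`. Since `p ∤ 2r`, `|ρ| = 2p` forces `|a| = p` and `|x| = 2`,
and `|τ| = 2` forces `b = 1` and `|y| = 2`. If `x` and `y` commuted, so would `ρ` and `τ`, and
`G` would be abelian; so `x` and `y` are non-commuting involutions of `D_{2r}`, hence reflections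
`sr i`, `sr j`, and these generate `D_{2r}` iff `j - i` is a unit. Conversely `ρ² = (a², 1)`
generates `Z_p × 1`, so `ρ` and `τ` generate `G` as soon as `sr i` and `sr j` generate `D_{2r}`.
The pairs are therefore parametrized by `a ≠ 1`, `i ∈ Z_r` and the unit `j - i`.
-/

open DihedralGroup Subgroup

lemma Nat.eq_and_eq_two_of_lcm_eq_two_mul {p a b : ℕ} (hp : p.Prime) (ha : a ∣ p)
    (hb : ¬ p ∣ b) (h : a.lcm b = 2 * p) : a = p ∧ b = 2 := by
  rcases hp.eq_one_or_self_of_dvd a ha with rfl | rfl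
  · rw [Nat.lcm_one_left] at h
    exact absurd (h ▸ dvd_mul_left p 2) hb
  · rw [((Nat.Prime.coprime_iff_not_dvd hp).mpr hb).lcm_eq_mul, mul_comm] at h
    exact ⟨rfl, Nat.eq_of_mul_eq_mul_right hp.pos h⟩

lemma Nat.eq_one_and_eq_two_of_lcm_eq_two {p a b : ℕ} (hp : Odd p) (ha : a ∣ p)
    (h : a.lcm b = 2) : a = 1 ∧ b = 2 := by
  have ha2 : a ∣ 2 := h ▸ Nat.dvd_lcm_left a b
  obtain rfl : a = 1 := by
    rcases (Nat.dvd_prime Nat.prime_two).mp ha2 with h1 | rfl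
    · exact h1
    · exact absurd (hp.of_dvd_nat ha) (by decide)
  exact ⟨rfl, by rwa [Nat.lcm_one_left] at h⟩

lemma commute_of_closure_pair_eq_top {G : Type*} [Group G] {x y : G} (hxy : Commute x y)
    (h : closure {x, y} = ⊤) (a b : G) : Commute a b := by
  have hcomm : IsMulCommutative (closure ({x, y} : Set G)) :=
    isMulCommutative_closure (by
      rintro _ (rfl | rfl) _ (rfl | rfl)
      exacts [rfl, hxy, hxy.symm, rfl])
  rw [h] at hcomm
  exact congrArg Subtype.val (hcomm.is_comm.comm ⟨a, mem_top a⟩ ⟨b, mem_top b⟩)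

namespace Subgroup

variable {A B : Type*} [Group A] [Group B]

lemma map_snd_closure_pair (a b : A) (x y : B) :
    (closure {(a, x), (b, y)}).map (MonoidHom.snd A B) = closure {x, y} := by
  rw [MonoidHom.map_closure, Set.image_pair]
  rfl

lemma eq_top_of_range_inl_le_of_map_snd_eq_top {H : Subgroup (A × B)}
    (hA : (MonoidHom.inl A B).range ≤ H) (hB : H.map (MonoidHom.snd A B) = ⊤) : H = ⊤ := by
  rw [eq_top_iff']
  rintro ⟨a, b⟩
  obtain ⟨h, hH, rfl⟩ := hB ▸ mem_top b
  have : (a, h.2) = (a * h.1⁻¹, 1) * h := by ext <;> simp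
  exact this ▸ mul_mem (hA ⟨a * h.1⁻¹, rfl⟩) hH

end Subgroup

namespace DihedralGroup

variable {n : ℕ}

lemma commute_r_of_orderOf_eq_two {a : ZMod n} (h : orderOf (r a) = 2)
    (y : DihedralGroup n) : Commute (r a) y := by
  have ha : -a = a := by simpa only [inv_r, r.injEq] using inv_eq_self_of_orderOf_eq_two h
  cases y with
  | r b => simp only [Commute, SemiconjBy, r_mul_r, add_comm]
  | sr b => simp only [Commute, SemiconjBy, r_mul_sr, sr_mul_r, sub_eq_add_neg, ha]

lemma exists_eq_sr_of_not_commute {x y : DihedralGroup n} (hx : orderOf x = 2)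
    (hxy : ¬ Commute x y) : ∃ i, x = sr i := by
  cases x with
  | r a => exact absurd (commute_r_of_orderOf_eq_two hx y) hxy
  | sr i => exact ⟨i, rfl⟩

def dihedralSubgroup (K : AddSubgroup (ZMod n)) (i : ZMod n) : Subgroup (DihedralGroup n) where
  carrier := fun g => match g with
    | r a => a ∈ K
    | sr b => b - i ∈ K
  one_mem' := K.zero_mem
  mul_mem' := by
    rintro (a | a) (b | b) ha hb
    · exact K.add_mem ha hb
    · show b - a - i ∈ K
      rw [sub_right_comm]
      exact K.sub_mem hb ha
    · show a + b - i ∈ K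
      rw [add_sub_right_comm]
      exact K.add_mem ha hb
    · show b - a ∈ K
      rw [← sub_sub_sub_cancel_right b a i]
      exact K.sub_mem hb ha
  inv_mem' := by
    rintro (a | a) ha
    · exact K.neg_mem ha
    · exact ha

lemma closure_sr_pair_eq_top_iff (i j : ZMod n) :
    closure {sr i, sr j} = ⊤ ↔ IsUnit (j - i) := by
  constructor
  · intro h
    have hle : closure {sr i, sr j} ≤ dihedralSubgroup (AddSubgroup.zmultiples (j - i)) i := by
      rw [closure_le]
      rintro _ (rfl | rfl)
      · show i - i ∈ AddSubgroup.zmultiples (j - i)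
        rw [sub_self]
        exact AddSubgroup.zero_mem _
      · exact AddSubgroup.mem_zmultiples (j - i)
    obtain ⟨k, hk⟩ := AddSubgroup.mem_zmultiples_iff.mp ((h ▸ hle) (mem_top (r 1)))
    exact IsUnit.of_mul_eq_one (k : ZMod n) (by rwa [mul_comm, ← zsmul_eq_mul])
  · rintro ⟨u, hu⟩
    have hr : ∀ a, r a ∈ closure {sr i, sr j} := by
      intro a
      obtain ⟨k, hk⟩ := ZMod.intCast_surjective (((u⁻¹ : (ZMod n)ˣ) : ZMod n) * a)
      have hmem : r (j - i) ∈ closure {sr i, sr j} :=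
        sr_mul_sr i j ▸ mul_mem (subset_closure (by simp)) (subset_closure (by simp))
      have := zpow_mem hmem k
      rwa [r_zpow, hk, ← hu, Units.mul_inv_cancel_left] at this
    rw [eq_top_iff']
    rintro (a | b)
    · exact hr a
    · have := mul_mem (hr (i - b)) (subset_closure (Set.mem_insert (sr i) {sr j}))
      rwa [r_mul_sr, sub_sub_cancel] at this

end DihedralGroup

lemma closure_pair_prod_eq_top {A B : Type*} [Group A] [Group B] {p : ℕ} [Fact p.Prime]
    (hA : Nat.card A = p) (hp : Odd p) {a b : A} (ha : a ≠ 1) {x y : B} (hx : x ^ 2 = 1)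
    (hxy : closure {x, y} = ⊤) : closure {(a, x), (b, y)} = ⊤ := by
  refine eq_top_of_range_inl_le_of_map_snd_eq_top ?_ (by rw [map_snd_closure_pair, hxy])
  have ha2 : a ^ 2 ≠ 1 := fun h => ha <|
    (pow_eq_one_iff_of_coprime (Nat.coprime_two_right.mpr hp)).mp ⟨hA ▸ pow_card_eq_one', h⟩
  -- `(a, x) ^ 2 = (a ^ 2, 1)`, and `a ^ 2` generates the group `A` of prime order
  rw [MonoidHom.range_eq_map, ← zpowers_eq_top_of_prime_card hA ha2, MonoidHom.map_zpowers,
    zpowers_le, MonoidHom.inl_apply, ← hx, ← Prod.pow_mk]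
  exact pow_mem (subset_closure (Set.mem_insert _ _)) 2

section

variable {A : Type*} [CommGroup A] {p n : ℕ} [Fact p.Prime]

lemma exists_sr_of_closure_pair_eq_top (hA : Nat.card A = p) (hp : Odd p) (hn : 3 ≤ n)
    (hpn : ¬ p ∣ n) {a b : A} {x y : DihedralGroup n} (h : closure {(a, x), (b, y)} = ⊤)
    (hρ : orderOf (a, x) = 2 * p) (hτ : orderOf (b, y) = 2) :
    a ≠ 1 ∧ b = 1 ∧ ∃ i j, x = sr i ∧ y = sr j ∧ IsUnit (j - i) := by
  have hpx : ¬ p ∣ orderOf x := fun hdvd =>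
    hpn <| (Nat.coprime_two_right.mpr hp).dvd_of_dvd_mul_left <|
      hdvd.trans (nat_card (n := n) ▸ orderOf_dvd_natCard x)
  obtain ⟨ha, hx⟩ := Nat.eq_and_eq_two_of_lcm_eq_two_mul Fact.out
    (hA ▸ orderOf_dvd_natCard a) hpx (Prod.orderOf_mk.symm.trans hρ)
  obtain ⟨hb, hy⟩ := Nat.eq_one_and_eq_two_of_lcm_eq_two hp (hA ▸ orderOf_dvd_natCard b)
    (Prod.orderOf_mk.symm.trans hτ)
  have hxy : ¬ Commute x y := by
    intro hxy
    have hG := commute_of_closure_pair_eq_top (Prod.commute_iff.mpr ⟨Commute.all a b, hxy⟩) h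
    exact not_commutative (n := n) (by omega) (by omega)
      ⟨⟨fun c d => (Prod.commute_iff.mp (hG ((1 : A), c) ((1 : A), d))).2⟩⟩
  obtain ⟨i, rfl⟩ := exists_eq_sr_of_not_commute hx hxy
  obtain ⟨j, rfl⟩ := exists_eq_sr_of_not_commute hy (fun h => hxy h.symm)
  refine ⟨fun h1 => ?_, orderOf_eq_one_iff.mp hb, i, j, rfl, rfl, ?_⟩
  · rw [h1, orderOf_one] at ha
    exact (Fact.out : p.Prime).one_lt.ne ha
  · rw [← closure_sr_pair_eq_top_iff, ← map_snd_closure_pair a b, h]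
    exact map_top_of_surjective _ Prod.snd_surjective

variable (A n) in
def rotaryPair (t : {a : A // a ≠ 1} × ZMod n × (ZMod n)ˣ) :
    (A × DihedralGroup n) × (A × DihedralGroup n) :=
  ((t.1, sr t.2.1), (1, sr (t.2.1 + (t.2.2 : ZMod n))))

lemma rotaryPair_injective : Function.Injective (rotaryPair A n) := by
  rintro ⟨a, i, u⟩ ⟨a', i', u'⟩ h
  simp only [rotaryPair, Prod.mk.injEq, sr.injEq] at h
  obtain ⟨⟨ha, rfl⟩, -, hu⟩ := h
  rw [Subtype.ext ha, Units.ext (add_left_cancel hu)]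

lemma mem_range_rotaryPair_iff (hA : Nat.card A = p) (hp : Odd p) (hn : 3 ≤ n)
    (hpn : ¬ p ∣ n) (q : (A × DihedralGroup n) × (A × DihedralGroup n)) :
    q ∈ Set.range (rotaryPair A n) ↔
      closure {q.1, q.2} = ⊤ ∧ orderOf q.1 = 2 * p ∧ orderOf q.2 = 2 := by
  constructor
  · rintro ⟨⟨⟨a, ha⟩, i, u⟩, rfl⟩
    dsimp only [rotaryPair]
    have hgen : closure {sr i, sr (i + (u : ZMod n))} = ⊤ := by
      rw [closure_sr_pair_eq_top_iff, add_sub_cancel_left]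
      exact u.isUnit
    refine ⟨closure_pair_prod_eq_top hA hp ha (by rw [sq, sr_mul_self]) hgen, ?_, ?_⟩
    · rw [Prod.orderOf_mk, orderOf_eq_prime (hA ▸ pow_card_eq_one') ha, orderOf_sr,
        (Nat.coprime_two_right.mpr hp).lcm_eq_mul, mul_comm]
    · rw [Prod.orderOf_mk, orderOf_one, orderOf_sr, Nat.lcm_one_left]
  · obtain ⟨⟨a, x⟩, b, y⟩ := q
    rintro ⟨h, hρ, hτ⟩
    obtain ⟨ha, rfl, i, j, rfl, rfl, u, hu⟩ :=
      exists_sr_of_closure_pair_eq_top hA hp hn hpn h hρ hτ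
    exact ⟨⟨⟨a, ha⟩, i, u⟩, by rw [rotaryPair, hu, add_sub_cancel]⟩

theorem card_rotaryPairs (hA : Nat.card A = p) (hp : Odd p) (hn : 3 ≤ n) (hpn : ¬ p ∣ n) :
    Nat.card {q : (A × DihedralGroup n) × (A × DihedralGroup n) //
      closure {q.1, q.2} = ⊤ ∧ orderOf q.1 = 2 * p ∧ orderOf q.2 = 2}
      = (p - 1) * n * n.totient := by
  have : NeZero n := ⟨by omega⟩
  have hA' : Nat.card {a : A // a ≠ 1} = p - 1 := by
    have := Nat.finite_of_card_ne_zero (hA ▸ NeZero.ne p)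
    have := Fintype.ofFinite A
    classical
    rw [← hA, Nat.card_eq_fintype_card, Nat.card_eq_fintype_card, Fintype.card_subtype_compl,
      Fintype.card_subtype_eq]
  rw [← Nat.card_congr (Equiv.subtypeEquivRight (mem_range_rotaryPair_iff hA hp hn hpn)),
    Nat.card_range_of_injective rotaryPair_injective, Nat.card_prod, Nat.card_prod, hA',
    Nat.card_zmod, Nat.card_eq_fintype_card (α := (ZMod n)ˣ), ZMod.card_units_eq_totient,
    mul_assoc]

end

/-- For `G = Z_p × D_{2r}` (`p` an odd prime, `p ∤ r`, `r ≥ 3`), the number of pairs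
`(ρ, τ)` with `⟨ρ, τ⟩ = G`, `|ρ| = 2p` and `|τ| = 2` is exactly `(p-1) r φ(r)`. -/
theorem stmt_12 (p r : ℕ) [Fact p.Prime] (hp : Odd p) (hr : 3 ≤ r) (hpr : ¬ p ∣ r) :
    Nat.card {q : (Multiplicative (ZMod p) × DihedralGroup r) ×
        (Multiplicative (ZMod p) × DihedralGroup r) //
      Subgroup.closure {q.1, q.2} = ⊤ ∧ orderOf q.1 = 2 * p ∧ orderOf q.2 = 2}
      = (p - 1) * r * r.totient :=
  card_rotaryPairs (Nat.card_zmod p) hp hr hpr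
end

section
/- Let V_1 = Z_p^{d_1}, V_2 = Z_p^{d_2}, and G = (V_1 × V_2) ⋊_{(ψ_1, ψ_2)} D_{2r}, where p is an odd prime, p ∤ r, r ≥ 3, and ψ_1, ψ_2 are irreducible F_p-representations of D_{2r}. If G admits a generating pair (ρ, τ) with |ρ| = 2p and |τ| = 2, then ψ_1 and ψ_2 are not isomorphic as representations. -/
/-!
Write `V = V₁ × V₂` and let `C` be the rotation subgroup of `D_{2r}`. As `p ∤ r` and `τ² = 1`,
the images of `ρ` and `τ` in `D_{2r}` are reflections `s_i`, `s_j` (a rotation of order at most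
two is central, and `D_{2r}` is not abelian), so `ρ²`, `τ²` and `(ρτ)^r` lie in `V`. If a
`D_{2r}`-invariant subgroup `M` of `V` contains them, then `G / M` is generated by two involutions
whose product has order dividing `r`, so it has at most `2r = |D_{2r}|` elements and `M = V`.

Take for `M` the span of the `C`-orbit of `v = ρ²`; it is invariant because `s_i` fixes `v`.
An isomorphism `ζ : V₁ ≅ V₂` makes `M` proper: by irreducibility the `C`-orbit of `v₁` spans
`V₁`, so `ζ⁻¹ v₂ = f v₁` for an `f` commuting with `C`, and `M` lies in the graph of `ζ ∘ f`.
Finally `(ρτ)^r ∈ M`: it is a `C`-norm, hence `0` when `V₁` has no nonzero `C`-fixed vector;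
otherwise `C` acts trivially, `s_i` fixes `v ≠ 0`, so `D_{2r}` acts trivially and, `p` being odd,
everything lies in `ℤ v`.
-/

section TwoInvolutions

variable {Q : Type*} [Group Q] {x y : Q}

theorem Subgroup.exists_zpow_of_mem_closure_pair_of_mul_self (hx : x * x = 1) (hy : y * y = 1)
    {g : Q} (hg : g ∈ closure {x, y}) :
    ∃ k : ℤ, g = (x * y) ^ k ∨ g = x * (x * y) ^ k := by
  have hx' : x⁻¹ = x := inv_eq_of_mul_eq_one_left hx
  have hy' : y⁻¹ = y := inv_eq_of_mul_eq_one_left hy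
  have hconj (k : ℤ) : (x * y) ^ k * x = x * (x * y) ^ (-k) := by
    rw [mul_zpow_mul, zpow_neg, ← inv_zpow, mul_inv_rev, hx', hy']
  refine closure_induction ?_ ⟨0, .inl (zpow_zero _).symm⟩ ?_ ?_ hg
  · rintro g (rfl | rfl)
    · exact ⟨0, .inr (by simp)⟩
    · exact ⟨1, .inr (by rw [zpow_one, ← mul_assoc, hx, one_mul])⟩
  · rintro a b - - ⟨k, rfl | rfl⟩ ⟨l, rfl | rfl⟩
    · exact ⟨k + l, .inl (zpow_add _ _ _).symm⟩
    · exact ⟨-k + l, .inr (by rw [← mul_assoc, hconj, mul_assoc, zpow_add])⟩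
    · exact ⟨k + l, .inr (by rw [mul_assoc, zpow_add])⟩
    · refine ⟨-k + l, .inl ?_⟩
      rw [mul_assoc, ← mul_assoc _ x, hconj, ← mul_assoc, ← mul_assoc, hx, one_mul, ← zpow_add]
  · rintro a - ⟨k, rfl | rfl⟩
    · exact ⟨-k, .inl (zpow_neg _ _).symm⟩
    · exact ⟨k, .inr (by rw [mul_inv_rev, hx', ← zpow_neg, hconj, neg_neg])⟩

theorem Subgroup.card_le_of_closure_pair_eq_top_of_mul_self {n : ℕ} (hn : 0 < n)
    (hx : x * x = 1) (hy : y * y = 1) (hxy : (x * y) ^ n = 1) (hgen : closure {x, y} = ⊤) :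
    Finite Q ∧ Nat.card Q ≤ 2 * n := by
  let f : Bool × Fin n → Q := fun b => (if b.1 then x else 1) * (x * y) ^ (b.2 : ℕ)
  have hf : Function.Surjective f := by
    intro g
    obtain ⟨k, hk⟩ := exists_zpow_of_mem_closure_pair_of_mul_self hx hy (hgen ▸ mem_top g)
    have hlt : (k % n).toNat < n := by
      have := Int.emod_lt_of_pos k (Int.natCast_pos.mpr hn)
      omega
    have hmod : (x * y) ^ k = (x * y) ^ (k % n).toNat := by
      rw [zpow_eq_zpow_emod' k hxy, ← zpow_natCast,
        Int.toNat_of_nonneg (Int.emod_nonneg _ (by omega))]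
    rcases hk with hk | hk
    · exact ⟨(false, ⟨_, hlt⟩), by simp [f, hk, hmod]⟩
    · exact ⟨(true, ⟨_, hlt⟩), by simp [f, hk, hmod]⟩
  refine ⟨Finite.of_surjective f hf, ?_⟩
  calc Nat.card Q ≤ Nat.card (Bool × Fin n) := Nat.card_le_card_of_surjective f hf
    _ = 2 * n := by simp

end TwoInvolutions

namespace DihedralGroup

variable {n : ℕ}

theorem sq_eq_one_of_orderOf_dvd {p : ℕ} (hp : p.Prime) (hpn : ¬ p ∣ n) {g : DihedralGroup n}
    (hg : orderOf g ∣ 2 * p) : g ^ 2 = 1 := by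
  have hcard : orderOf g ∣ 2 * n := nat_card (n := n) ▸ orderOf_dvd_natCard g
  have hgcd : Nat.gcd (2 * p) (2 * n) = 2 := by
    rw [Nat.gcd_mul_left, (hp.coprime_iff_not_dvd.mpr hpn).gcd_eq_one, mul_one]
  exact orderOf_dvd_iff_pow_eq_one.mp (hgcd ▸ Nat.dvd_gcd hg hcard)

theorem exists_eq_sr_of_closure_pair_eq_top (hn : 3 ≤ n) {a b : DihedralGroup n}
    (hgen : Subgroup.closure {a, b} = ⊤) (ha : a ^ 2 = 1) : ∃ i, a = sr i := by
  obtain k | i := a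
  · exfalso
    have hk : k + k = 0 := by
      rw [r_pow, one_def, r.injEq] at ha
      linear_combination ha
    have hcentral (g : DihedralGroup n) : r k * g = g * r k := by
      obtain m | m := g
      · rw [r_mul_r, r_mul_r, add_comm]
      · rw [r_mul_sr, sr_mul_r, sr.injEq]
        linear_combination -hk
    have := Subgroup.isMulCommutative_closure (k := {r k, b}) (by
      rintro x (rfl | rfl) y (rfl | rfl) <;>
        first | rfl | exact hcentral _ | exact (hcentral _).symm)
    refine not_commutative (n := n) (by omega) (by omega) ⟨⟨fun x y => ?_⟩⟩
    exact setLike_mul_comm (s := Subgroup.closure {r k, b}) (hgen ▸ Subgroup.mem_top x)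
      (hgen ▸ Subgroup.mem_top y)
  · exact ⟨i, rfl⟩

theorem exists_pow_eq_r_of_closure_sr_sr [NeZero n] {i j : ZMod n}
    (hgen : Subgroup.closure {sr i, sr j} = ⊤) (k : ZMod n) : ∃ m : ℕ, r (j - i) ^ m = r k := by
  obtain ⟨z, hz | hz⟩ := Subgroup.exists_zpow_of_mem_closure_pair_of_mul_self (sr_mul_self i)
    (sr_mul_self j) (hgen ▸ Subgroup.mem_top (r k))
  · rw [sr_mul_sr] at hz
    exact mem_powers_iff_mem_zpowers.mpr ⟨z, hz.symm⟩
  · rw [sr_mul_sr, r_zpow, sr_mul_r] at hz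
    cases hz

end DihedralGroup

namespace SemidirectProduct

variable {N G : Type*} [Group G]

theorem pow_left [CommGroup N] {φ : G →* MulAut N} (g : N ⋊[φ] G) (n : ℕ) :
    (g ^ n).left = ∏ k ∈ Finset.range n, φ (g.right ^ k) g.left := by
  induction n with
  | zero => rfl
  | succ n ih =>
    rw [pow_succ, mul_left, ih, Finset.prod_range_succ, ← rightHom_eq_right, ← map_pow]

variable [Group N] {φ : G →* MulAut N}

theorem mem_map_inl_iff {K : Subgroup N} {g : N ⋊[φ] G} :
    g ∈ K.map inl ↔ g.left ∈ K ∧ g.right = 1 :=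
  ⟨by rintro ⟨k, hk, rfl⟩; exact ⟨hk, rfl⟩,
    fun ⟨hl, hr⟩ => ⟨g.left, hl, SemidirectProduct.ext rfl hr.symm⟩⟩

theorem normal_map_inl {K : Subgroup N} [K.Normal] (hK : ∀ g, ∀ k ∈ K, φ g k ∈ K) :
    (K.map inl : Subgroup (N ⋊[φ] G)).Normal := by
  refine ⟨fun h hh g => ?_⟩
  rw [mem_map_inl_iff] at hh ⊢
  obtain ⟨hl, hr⟩ := hh
  refine ⟨?_, by simp [hr]⟩
  simpa [hr] using Subgroup.Normal.conj_mem inferInstance _ (hK g.right _ hl) g.left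

theorem ker_rightHom_le_of_card_quotient_le [Finite G] (H : Subgroup (N ⋊[φ] G)) [H.Normal]
    (hH : H ≤ rightHom.ker) [Finite ((N ⋊[φ] G) ⧸ H)]
    (hcard : Nat.card ((N ⋊[φ] G) ⧸ H) ≤ Nat.card G) :
    rightHom.ker ≤ H := by
  set π := QuotientGroup.lift H rightHom hH
  have hπ : Function.Surjective π := fun g => ⟨QuotientGroup.mk (inr g), rfl⟩
  intro g hg
  rw [← QuotientGroup.eq_one_iff]
  exact (hπ.bijective_of_nat_card_le hcard).1 (by rwa [map_one])

theorem eq_top_of_closure_pair_eq_top [Finite G] {n : ℕ} (hn : 0 < n) (hG : 2 * n ≤ Nat.card G)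
    {K : Subgroup N} [K.Normal] (hK : ∀ g, ∀ k ∈ K, φ g k ∈ K) {ρ τ : N ⋊[φ] G}
    (hgen : Subgroup.closure {ρ, τ} = ⊤) (hρ : ρ * ρ ∈ K.map inl) (hτ : τ * τ ∈ K.map inl)
    (hρτ : (ρ * τ) ^ n ∈ K.map inl) : K = ⊤ := by
  have := normal_map_inl hK
  set π := QuotientGroup.mk' (K.map (inl : N →* N ⋊[φ] G))
  have hmem {g} (hg : g ∈ K.map inl) : π g = 1 := (QuotientGroup.eq_one_iff g).mpr hg
  have hgenQ : Subgroup.closure {π ρ, π τ} = ⊤ := by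
    rw [← Set.image_pair, ← MonoidHom.map_closure, hgen,
      Subgroup.map_top_of_surjective _ (QuotientGroup.mk'_surjective _)]
  obtain ⟨_, hcard⟩ := Subgroup.card_le_of_closure_pair_eq_top_of_mul_self hn
    (by rw [← map_mul, hmem hρ]) (by rw [← map_mul, hmem hτ])
    (by rw [← map_mul, ← map_pow, hmem hρτ]) hgenQ
  have hker := ker_rightHom_le_of_card_quotient_le _
    (fun g hg => (mem_map_inl_iff.mp hg).2) (hcard.trans hG)
  exact eq_top_iff.mpr fun k _ => (mem_map_inl_iff.mp (hker (rightHom_inl (φ := φ) k))).1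

theorem closure_right_eq_top {ρ τ : N ⋊[φ] G} (hgen : Subgroup.closure {ρ, τ} = ⊤) :
    Subgroup.closure {ρ.right, τ.right} = ⊤ := by
  rw [← rightHom_eq_right, ← Set.image_pair, ← MonoidHom.map_closure, hgen,
    Subgroup.map_top_of_surjective _ rightHom_surjective]

end SemidirectProduct

namespace MonoidHom

variable {D A : Type*} [Monoid D] [AddCommGroup A] (ψ : D →* AddMonoid.End A)

theorem map_mul_apply (g h : D) (x : A) : ψ (g * h) x = ψ g (ψ h x) := by
  rw [map_mul]; rfl

def IsInvariant (W : AddSubgroup A) : Prop := ∀ g, ∀ x ∈ W, ψ g x ∈ W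

def IsIrreducible : Prop := ∀ W : AddSubgroup A, IsInvariant ψ W → W = ⊥ ∨ W = ⊤

def fixedBy (S : Set D) : AddSubgroup A where
  carrier := {x | ∀ g ∈ S, ψ g x = x}
  add_mem' hx hy g hg := by rw [map_add, hx g hg, hy g hg]
  zero_mem' _ _ := map_zero _
  neg_mem' hx g hg := (_root_.map_neg (ψ g) _).trans (congrArg _ (hx g hg))

theorem mem_fixedBy {S : Set D} {x : A} : x ∈ fixedBy ψ S ↔ ∀ g ∈ S, ψ g x = x := .rfl

theorem apply_sum_range_pow_apply {g : D} {m : ℕ} (hg : g ^ m = 1) (x : A) :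
    ψ g (∑ k ∈ Finset.range m, ψ (g ^ k) x) = ∑ k ∈ Finset.range m, ψ (g ^ k) x := by
  simp_rw [map_sum, ← map_mul_apply, ← pow_succ']
  have h := (Finset.sum_range_succ' (fun k => ψ (g ^ k) x) m).symm.trans
    (Finset.sum_range_succ _ m)
  rw [hg, pow_zero] at h
  exact add_right_cancel h

theorem apply_add_apply_of_mul_self_eq_one {g : D} (hg : g * g = 1) (x : A) :
    ψ g (x + ψ g x) = x + ψ g x := by
  rw [map_add, ← map_mul_apply, hg, map_one, add_comm]; rfl

end MonoidHom

theorem AddMonoid.End.exists_commute_apply_eq {ι A : Type*} [AddCommGroup A]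
    (T : ι → AddMonoid.End A) (hT : ∀ a b, Commute (T a) (T b)) {x : A}
    (hx : AddSubgroup.closure (Set.range fun a => T a x) = ⊤) (y : A) :
    ∃ f : AddMonoid.End A, (∀ a, Commute (T a) f) ∧ f x = y := by
  let C := (Subring.centralizer (Set.range T)).toAddSubgroup.map (AddMonoidHom.eval x)
  have hle : AddSubgroup.closure (Set.range fun a => T a x) ≤ C := by
    rw [AddSubgroup.closure_le]
    rintro _ ⟨a, rfl⟩
    refine ⟨T a, ?_, rfl⟩
    rintro _ ⟨b, rfl⟩
    exact hT b a
  obtain ⟨f, hf, rfl⟩ := hle (hx ▸ AddSubgroup.mem_top y)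
  exact ⟨f, fun a => hf (T a) ⟨a, rfl⟩, rfl⟩

theorem eq_succ_nsmul_add_self {A : Type*} [AddCommMonoid A] {k : ℕ} {z : A}
    (hz : (2 * k + 1) • z = 0) : z = (k + 1) • (z + z) := by
  calc z = (2 * k + 1) • z + z := by rw [hz, zero_add]
    _ = (k + 1) • (z + z) := by
      rw [← succ_nsmul, ← two_nsmul, smul_smul]
      congr 1
      ring

namespace MonoidHom

open DihedralGroup

variable {n : ℕ} {A : Type*} [AddCommGroup A] (ψ : DihedralGroup n →* AddMonoid.End A)

def rotationSpan (x : A) : AddSubgroup A := AddSubgroup.closure (Set.range fun k => ψ (r k) x)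

theorem mem_rotationSpan_self (x : A) : x ∈ ψ.rotationSpan x :=
  AddSubgroup.subset_closure ⟨0, show ψ (r 0) x = x by rw [r_zero, map_one]; rfl⟩

theorem isInvariant_rotationSpan {i : ZMod n} {x : A} (hx : ψ (sr i) x = x) :
    ψ.IsInvariant (ψ.rotationSpan x) := by
  intro g y hy
  induction hy using AddSubgroup.closure_induction with
  | mem _ h =>
    obtain ⟨k, rfl⟩ := h
    apply AddSubgroup.subset_closure
    obtain a | a := g
    · exact ⟨a + k, show ψ (r (a + k)) x = _ by rw [← r_mul_r, map_mul_apply]⟩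
    · refine ⟨i - (a + k), ?_⟩
      show ψ (r (i - (a + k))) x = ψ (sr a) (ψ (r k) x)
      rw [← hx, ← map_mul_apply, r_mul_sr, sub_sub_cancel, ← sr_mul_r, map_mul_apply, hx]
  | zero => rw [map_zero]; exact zero_mem _
  | add _ _ _ _ h₁ h₂ => rw [map_add]; exact add_mem h₁ h₂
  | neg _ _ h => rw [_root_.map_neg]; exact neg_mem h

theorem isInvariant_fixedBy_range_r : ψ.IsInvariant (ψ.fixedBy (Set.range r)) := by
  rintro g x hx _ ⟨k, rfl⟩
  obtain a | a := g
  · rw [← map_mul_apply, r_mul_r, add_comm, ← r_mul_r, map_mul_apply, hx _ ⟨k, rfl⟩]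
  · rw [← map_mul_apply, r_mul_sr, sub_eq_add_neg, ← sr_mul_r, map_mul_apply, hx _ ⟨-k, rfl⟩]

theorem fixedBy_eq_bot_or_of_isIrreducible (hψ : ψ.IsIrreducible) (i : ZMod n) :
    ψ.fixedBy (Set.range r) = ⊥ ∨ ψ.fixedBy Set.univ = ⊤ ∨ ψ.fixedBy {sr i} = ⊥ := by
  refine (hψ _ ψ.isInvariant_fixedBy_range_r).imp_right fun hrot => ?_
  have hr (k : ZMod n) (x : A) : ψ (r k) x = x := (hrot ▸ AddSubgroup.mem_top x) _ ⟨k, rfl⟩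
  have hsr (a : ZMod n) (x : A) : ψ (sr a) x = ψ (sr i) x := by
    rw [← add_sub_cancel i a, ← sr_mul_r, map_mul_apply, hr]
  have hinv : ψ.IsInvariant (ψ.fixedBy {sr i}) := by
    rintro (a | a) x hx _ rfl
    · rw [hr, hx _ rfl]
    · rw [hsr a, hx _ rfl, hx _ rfl]
  refine (hψ _ hinv).symm.imp (fun htop => ?_) _root_.id
  rw [eq_top_iff]
  rintro x - (a | a) -
  · exact hr a x
  · rw [hsr]
    exact (htop ▸ AddSubgroup.mem_top x : x ∈ ψ.fixedBy {sr i}) _ rfl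

theorem sum_mem_rotationSpan [NeZero n] {i j : ZMod n}
    (hgen : Subgroup.closure {sr i, sr j} = ⊤)
    (hψ : ψ.fixedBy (Set.range r) = ⊥ ∨ ψ.fixedBy Set.univ = ⊤ ∨ ψ.fixedBy {sr i} = ⊥)
    {k : ℕ} (hA : ∀ z : A, (2 * k + 1) • z = 0) {u w : A} (hu : u + ψ (sr i) u ≠ 0)
    (hw : w + ψ (sr j) w = 0) :
    ∑ m ∈ Finset.range n, ψ (r (j - i) ^ m) (u + ψ (sr i) w) ∈ ψ.rotationSpan (u + ψ (sr i) u) := by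
  rcases hψ with hrot | htriv | hsr
  · have hfix : ∑ m ∈ Finset.range n, ψ (r (j - i) ^ m) (u + ψ (sr i) w) ∈
        ψ.fixedBy (Set.range r) := by
      rintro _ ⟨a, rfl⟩
      obtain ⟨m, hm⟩ := exists_pow_eq_r_of_closure_sr_sr hgen a
      rw [← hm, map_pow, AddMonoid.End.coe_pow]
      exact Function.IsFixedPt.iterate (ψ.apply_sum_range_pow_apply (by
        rw [r_pow, ZMod.natCast_self, mul_zero, r_zero]) _) m
    rw [hrot, AddSubgroup.mem_bot] at hfix
    rw [hfix]
    exact zero_mem _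
  · have htriv' (g : DihedralGroup n) (z : A) : ψ g z = z :=
      (htriv ▸ AddSubgroup.mem_top z) g trivial
    simp only [htriv', Finset.sum_const, Finset.card_range] at hw ⊢
    have huw : u + w = (k + 1) • (u + u) := by
      rw [← eq_succ_nsmul_add_self (hA u), eq_succ_nsmul_add_self (hA w), hw, nsmul_zero,
        add_zero]
    rw [huw]
    exact nsmul_mem (nsmul_mem (ψ.mem_rotationSpan_self _) _) _
  · have hfix : u + ψ (sr i) u ∈ ψ.fixedBy {sr i} := by
      rintro _ rfl
      exact ψ.apply_add_apply_of_mul_self_eq_one (sr_mul_self i) u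
    rw [hsr, AddSubgroup.mem_bot] at hfix
    exact absurd hfix hu

end MonoidHom

section Double

variable {D V₁ V₂ : Type*} [Monoid D] [AddCommGroup V₁] [AddCommGroup V₂]

def IsDoubleOf (ψ : D →* AddMonoid.End (V₁ × V₂)) (ψ₁ : D →* AddMonoid.End V₁) (e : V₁ ≃+ V₂) :
    Prop :=
  ∀ g z, ψ g z = (ψ₁ g z.1, e (ψ₁ g (e.symm z.2)))

variable {ψ : D →* AddMonoid.End (V₁ × V₂)} {ψ₁ : D →* AddMonoid.End V₁} {e : V₁ ≃+ V₂}

theorem IsDoubleOf.mem_fixedBy_iff (hψ : IsDoubleOf ψ ψ₁ e) {S : Set D} {z : V₁ × V₂} :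
    z ∈ ψ.fixedBy S ↔ z.1 ∈ ψ₁.fixedBy S ∧ e.symm z.2 ∈ ψ₁.fixedBy S := by
  simp only [MonoidHom.mem_fixedBy, hψ _ z, Prod.ext_iff, ← AddEquiv.eq_symm_apply,
    ← forall_and]

theorem IsDoubleOf.fixedBy_eq_bot (hψ : IsDoubleOf ψ ψ₁ e) {S : Set D} (h : ψ₁.fixedBy S = ⊥) :
    ψ.fixedBy S = ⊥ := by
  refine (AddSubgroup.eq_bot_iff_forall _).mpr fun z hz => ?_
  rw [hψ.mem_fixedBy_iff, h, AddSubgroup.mem_bot, AddSubgroup.mem_bot,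
    AddEquiv.map_eq_zero_iff] at hz
  exact Prod.ext hz.1 hz.2

theorem IsDoubleOf.fixedBy_eq_top (hψ : IsDoubleOf ψ ψ₁ e) {S : Set D} (h : ψ₁.fixedBy S = ⊤) :
    ψ.fixedBy S = ⊤ :=
  eq_top_iff.mpr fun z _ => hψ.mem_fixedBy_iff.mpr (by simp [h])

end Double

open DihedralGroup in
theorem IsDoubleOf.rotationSpan_ne_top {n : ℕ} {V₁ V₂ : Type*} [AddCommGroup V₁]
    [AddCommGroup V₂] [Nontrivial V₁] [Nontrivial V₂]
    {ψ : DihedralGroup n →* AddMonoid.End (V₁ × V₂)} {ψ₁ : DihedralGroup n →* AddMonoid.End V₁}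
    {e : V₁ ≃+ V₂} (hψ : IsDoubleOf ψ ψ₁ e) (hirr : ψ₁.IsIrreducible) {i : ZMod n}
    {v : V₁ × V₂} (hv : ψ (sr i) v = v) : ψ.rotationSpan v ≠ ⊤ := by
  have hv₁ : ψ₁ (sr i) v.1 = v.1 := (hψ.mem_fixedBy_iff.mp (fun _ hg => hg ▸ hv)).1 _ rfl
  by_cases h0 : v.1 = 0
  · refine ne_top_of_le_ne_top (b := (AddMonoidHom.fst V₁ V₂).ker) ?_ ?_
    · obtain ⟨x, hx⟩ := exists_ne (0 : V₁)
      exact fun htop => hx (htop ▸ AddSubgroup.mem_top (x, 0) : (x, (0 : V₂)) ∈ _)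
    · rw [MonoidHom.rotationSpan, AddSubgroup.closure_le]
      rintro _ ⟨k, rfl⟩
      show (ψ (r k) v).1 = 0
      rw [hψ _ v, h0]
      exact map_zero _
  · have hspan : ψ₁.rotationSpan v.1 = ⊤ :=
      (hirr _ (ψ₁.isInvariant_rotationSpan hv₁)).resolve_left fun hbot =>
        h0 (hbot ▸ ψ₁.mem_rotationSpan_self v.1 : v.1 ∈ (⊥ : AddSubgroup V₁))
    obtain ⟨f, hf, hfv⟩ := AddMonoid.End.exists_commute_apply_eq (fun k => ψ₁ (r k))
      (fun a b => by simp only [Commute, SemiconjBy, ← map_mul, r_mul_r, add_comm]) hspan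
      (e.symm v.2)
    refine ne_top_of_le_ne_top (b := (e.toAddMonoidHom.comp f).graph) ?_ ?_
    · obtain ⟨y, hy⟩ := exists_ne (0 : V₂)
      intro htop
      have := AddMonoidHom.mem_graph.mp (htop ▸ AddSubgroup.mem_top ((0 : V₁), y))
      simp only [map_zero] at this
      exact hy this.symm
    · rw [MonoidHom.rotationSpan, AddSubgroup.closure_le]
      rintro _ ⟨k, rfl⟩
      show e (f (ψ (r k) v).1) = (ψ (r k) v).2
      rw [hψ _ v, ← hfv]
      exact congrArg e (DFunLike.congr_fun (hf k) v.1).symm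

def addAutToEnd {V : Type*} [AddCommGroup V] : AddAut V →* AddMonoid.End V where
  toFun f := f.toAddMonoidHom
  map_one' := rfl
  map_mul' _ _ := rfl

section Blocks

variable {D V₁ V₂ : Type*} [Monoid D] [AddCommGroup V₁] [AddCommGroup V₂]

def blockFst (ψ : D →* AddAut (V₁ × V₂)) (hψ : ∀ g (v : V₁), (ψ g (v, 0)).2 = 0) :
    D →* AddMonoid.End V₁ where
  toFun g := (AddMonoidHom.fst V₁ V₂).comp ((addAutToEnd (ψ g)).comp (AddMonoidHom.inl V₁ V₂))
  map_one' := by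
    ext x
    show (ψ 1 (x, 0)).1 = x
    rw [map_one]
    rfl
  map_mul' g h := by
    ext x
    show (ψ (g * h) (x, 0)).1 = (ψ g ((ψ h (x, 0)).1, 0)).1
    rw [map_mul]
    exact congrArg (fun y => (ψ g y).1) (Prod.ext rfl (hψ h x))

variable {ψ : D →* AddAut (V₁ × V₂)}

theorem isDoubleOf_blockFst (hc₁ : ∀ g (v : V₁), (ψ g (v, 0)).2 = 0)
    (hc₂ : ∀ g (w : V₂), (ψ g (0, w)).1 = 0) {e : V₁ ≃+ V₂}
    (he : ∀ g v, e ((ψ g (v, 0)).1) = (ψ g (0, e v)).2) :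
    IsDoubleOf (addAutToEnd.comp ψ) (blockFst ψ hc₁) e := by
  intro g z
  show ψ g z = ((ψ g (z.1, 0)).1, e ((ψ g (e.symm z.2, 0)).1))
  rw [he, e.apply_symm_apply]
  conv_lhs => rw [show z = (z.1, 0) + (0, z.2) by simp, map_add]
  exact Prod.ext (by rw [Prod.fst_add, hc₂, add_zero]) (by rw [Prod.snd_add, hc₁, zero_add])

end Blocks

namespace SemidirectProduct

open DihedralGroup

theorem exists_right_eq_sr {N : Type*} [Group N] {n p : ℕ} {φ : DihedralGroup n →* MulAut N}
    (hn : 3 ≤ n) (hp : p.Prime) (hpn : ¬ p ∣ n) {ρ τ : N ⋊[φ] DihedralGroup n}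
    (hgen : Subgroup.closure {ρ, τ} = ⊤) (hρ : orderOf ρ = 2 * p) (hτ : orderOf τ = 2) :
    (∃ i, ρ.right = sr i) ∧ ∃ j, τ.right = sr j := by
  have hgen' := closure_right_eq_top hgen
  refine ⟨exists_eq_sr_of_closure_pair_eq_top hn hgen'
    (sq_eq_one_of_orderOf_dvd hp hpn (hρ ▸ orderOf_map_dvd rightHom ρ)), ?_⟩
  refine exists_eq_sr_of_closure_pair_eq_top hn (Set.pair_comm ρ.right _ ▸ hgen') ?_
  exact orderOf_dvd_iff_pow_eq_one.mp (hτ ▸ orderOf_map_dvd rightHom τ)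

section

variable {V D : Type*} [AddCommGroup V] [Group D] {ψ : D →* AddAut V}

theorem toAdd_mul_left (a b : Multiplicative V ⋊[addAutToMulAut.comp ψ] D) :
    (a * b).left.toAdd = a.left.toAdd + ψ a.right b.left.toAdd :=
  rfl

theorem toAdd_pow_left (a : Multiplicative V ⋊[addAutToMulAut.comp ψ] D) (m : ℕ) :
    (a ^ m).left.toAdd = ∑ k ∈ Finset.range m, ψ (a.right ^ k) a.left.toAdd := by
  rw [pow_left, toAdd_prod]
  rfl

theorem apply_toAdd_mul_self_left {a : Multiplicative V ⋊[addAutToMulAut.comp ψ] D}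
    (ha : a.right * a.right = 1) : ψ a.right (a * a).left.toAdd = (a * a).left.toAdd :=
  (addAutToEnd.comp ψ).apply_add_apply_of_mul_self_eq_one ha _

end

variable {V : Type*} [AddCommGroup V] {n : ℕ} [NeZero n] {ψ : DihedralGroup n →* AddAut V}
  {ρ τ : Multiplicative V ⋊[addAutToMulAut.comp ψ] DihedralGroup n} {i j : ZMod n}

theorem toAdd_pow_left_mem_rotationSpan
    (htri : (addAutToEnd.comp ψ).fixedBy (Set.range r) = ⊥ ∨
      (addAutToEnd.comp ψ).fixedBy Set.univ = ⊤ ∨ (addAutToEnd.comp ψ).fixedBy {sr i} = ⊥)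
    {k : ℕ} (hV : ∀ z : V, (2 * k + 1) • z = 0) (hgen : Subgroup.closure {ρ, τ} = ⊤)
    (hi : ρ.right = sr i) (hj : τ.right = sr j) (hρ : ρ * ρ ≠ 1) (hτ : τ * τ = 1) :
    ((ρ * τ) ^ n).left.toAdd ∈ (addAutToEnd.comp ψ).rotationSpan (ρ * ρ).left.toAdd := by
  have hu : (ρ * ρ).left.toAdd ≠ 0 := fun h =>
    hρ (SemidirectProduct.ext h (by rw [mul_right, hi, sr_mul_self]; rfl))
  have hw : τ.left.toAdd + ψ (sr j) τ.left.toAdd = 0 := by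
    rw [← hj, ← toAdd_mul_left, hτ]
    rfl
  rw [toAdd_pow_left, mul_right, hi, hj, sr_mul_sr, toAdd_mul_left, hi]
  rw [toAdd_mul_left, hi] at hu ⊢
  exact MonoidHom.sum_mem_rotationSpan _ (hi ▸ hj ▸ closure_right_eq_top hgen) htri hV hu hw

theorem rotationSpan_toAdd_mul_self_left_eq_top (hgen : Subgroup.closure {ρ, τ} = ⊤)
    (hi : ρ.right = sr i) (hj : τ.right = sr j) (hτ : τ * τ = 1)
    (hmem : ((ρ * τ) ^ n).left.toAdd ∈ (addAutToEnd.comp ψ).rotationSpan (ρ * ρ).left.toAdd) :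
    (addAutToEnd.comp ψ).rotationSpan (ρ * ρ).left.toAdd = ⊤ := by
  have hfix : ψ (sr i) (ρ * ρ).left.toAdd = (ρ * ρ).left.toAdd :=
    hi ▸ apply_toAdd_mul_self_left (by rw [hi, sr_mul_self])
  have htop := eq_top_of_closure_pair_eq_top (NeZero.pos n) (nat_card (n := n)).ge
    (K := AddSubgroup.toSubgroup ((addAutToEnd.comp ψ).rotationSpan (ρ * ρ).left.toAdd))
    (fun g _ hx => (addAutToEnd.comp ψ).isInvariant_rotationSpan hfix g _ hx)
    hgen ?_ (hτ ▸ one_mem _) ?_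
  · exact eq_top_iff.mpr fun x _ => (htop ▸ Subgroup.mem_top (Multiplicative.ofAdd x) :)
  · exact mem_map_inl_iff.mpr ⟨(addAutToEnd.comp ψ).mem_rotationSpan_self _,
      by rw [mul_right, hi, sr_mul_self]⟩
  · refine mem_map_inl_iff.mpr ⟨hmem, ?_⟩
    rw [← rightHom_eq_right, map_pow, map_mul, rightHom_eq_right, hi, hj, sr_mul_sr, r_pow,
      ZMod.natCast_self, mul_zero, r_zero]

end SemidirectProduct

theorem stmt_16_general (p r : ℕ) [Fact p.Prime] (hp : Odd p) (hr : 3 ≤ r) (hpr : ¬ p ∣ r)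
    (V₁ V₂ : Type) [AddCommGroup V₁] [AddCommGroup V₂]
    [Nontrivial V₁] [Nontrivial V₂]
    (hV₁ : ∀ v : V₁, p • v = 0) (hV₂ : ∀ v : V₂, p • v = 0)
    (ψ : DihedralGroup r →* AddAut (V₁ × V₂))
    (hc₁ : ∀ g (v : V₁), (ψ g (v, (0 : V₂))).2 = 0)
    (hc₂ : ∀ g (w : V₂), (ψ g ((0 : V₁), w)).1 = 0)
    (hirr₁ : ∀ W : AddSubgroup V₁,
      (∀ g, ∀ v ∈ W, (ψ g (v, (0 : V₂))).1 ∈ W) → W = ⊥ ∨ W = ⊤)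
    (ρ τ : Multiplicative (V₁ × V₂) ⋊[addAutToMulAut.comp ψ] DihedralGroup r)
    (hgen : Subgroup.closure {ρ, τ} = ⊤)
    (hρ : orderOf ρ = 2 * p) (hτ : orderOf τ = 2) :
    ¬ ∃ e : V₁ ≃+ V₂, ∀ g v, e ((ψ g (v, (0 : V₂))).1) = (ψ g ((0 : V₁), e v)).2 := by
  rintro ⟨e, he⟩
  have : NeZero r := ⟨by omega⟩
  obtain ⟨k, rfl⟩ := hp
  obtain ⟨⟨i, hi⟩, j, hj⟩ := SemidirectProduct.exists_right_eq_sr hr Fact.out hpr hgen hρ hτ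
  have hψ := isDoubleOf_blockFst hc₁ hc₂ he
  have hτ2 : τ * τ = 1 := by rw [← sq, ← hτ, pow_orderOf_eq_one]
  have hρ2 : ρ * ρ ≠ 1 := fun h => by
    have := Nat.le_of_dvd two_pos (hρ ▸ orderOf_dvd_of_pow_eq_one ((sq ρ).trans h))
    have := (Fact.out : (2 * k + 1).Prime).two_le
    omega
  have htri := ((blockFst ψ hc₁).fixedBy_eq_bot_or_of_isIrreducible hirr₁ i).imp
    hψ.fixedBy_eq_bot (Or.imp hψ.fixedBy_eq_top hψ.fixedBy_eq_bot)
  refine hψ.rotationSpan_ne_top hirr₁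
    (hi ▸ SemidirectProduct.apply_toAdd_mul_self_left (by rw [hi, DihedralGroup.sr_mul_self]))
    (SemidirectProduct.rotationSpan_toAdd_mul_self_left_eq_top hgen hi hj hτ2 ?_)
  exact SemidirectProduct.toAdd_pow_left_mem_rotationSpan htri
    (fun z => Prod.ext (hV₁ z.1) (hV₂ z.2)) hgen hi hj hρ2 hτ2

/-- Let `G = (V_1 × V_2) ⋊ D_{2r}` where `D_{2r}` acts componentwise via irreducible
representations `ψ_1, ψ_2` (`p` odd prime, `p ∤ r`, `r ≥ 3`). If `G` admits a generating
pair `(ρ, τ)` with `|ρ| = 2p` and `|τ| = 2`, then `ψ_1 ≇ ψ_2`. -/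
theorem stmt_16 (p r : ℕ) [Fact p.Prime] (hp : Odd p) (hr : 3 ≤ r) (hpr : ¬ p ∣ r)
    (V₁ V₂ : Type) [AddCommGroup V₁] [AddCommGroup V₂] [Finite V₁] [Finite V₂]
    [Nontrivial V₁] [Nontrivial V₂]
    (hV₁ : ∀ v : V₁, p • v = 0) (hV₂ : ∀ v : V₂, p • v = 0)
    (ψ : DihedralGroup r →* AddAut (V₁ × V₂))
    (hc₁ : ∀ g (v : V₁), (ψ g (v, (0 : V₂))).2 = 0)
    (hc₂ : ∀ g (w : V₂), (ψ g ((0 : V₁), w)).1 = 0)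
    (hirr₁ : ∀ W : AddSubgroup V₁,
      (∀ g, ∀ v ∈ W, (ψ g (v, (0 : V₂))).1 ∈ W) → W = ⊥ ∨ W = ⊤)
    (hirr₂ : ∀ W : AddSubgroup V₂,
      (∀ g, ∀ w ∈ W, (ψ g ((0 : V₁), w)).2 ∈ W) → W = ⊥ ∨ W = ⊤)
    (ρ τ : Multiplicative (V₁ × V₂) ⋊[addAutToMulAut.comp ψ] DihedralGroup r)
    (hgen : Subgroup.closure {ρ, τ} = ⊤)
    (hρ : orderOf ρ = 2 * p) (hτ : orderOf τ = 2) :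
    ¬ ∃ e : V₁ ≃+ V₂, ∀ g v, e ((ψ g (v, (0 : V₂))).1) = (ψ g ((0 : V₁), e v)).2 :=
  stmt_16_general p r hp hr hpr V₁ V₂ hV₁ hV₂ ψ hc₁ hc₂ hirr₁ ρ τ hgen hρ hτ
end
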